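/- Let n = 2m and L(x) = Σ_{i=0}^k α_i x^{2^{a_i}} be a linearized polynomial with all α_i ∈ F_{2^m}. Then Σ_{a ∈ F_{2^n}} (-1)^{Tr^n_1((a^{2^m}+a)·L(a))} = 2^m · Σ_{u ∈ F_{2^m}} (-1)^{Tr^m_1(Σ_{i=0}^k α_i u^{2^{a_i}+1})}. -/

import Mathlib

open Finset

/-- The sign `(-1)^{Tr(y)}` where `Tr(y) = ∑_{i<m} y^{2^i}` is the absolute trace
(valued in the prime field, viewed inside `F`). -/
def chi {F : Type*} [Field F] [DecidableEq F] (m : ℕ) (y : F) : ℤ :=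
  if (∑ i ∈ Finset.range m, y ^ 2 ^ i) = 0 then 1 else -1

/-!
With `q = 2^m`, the map `T = relTrace m`, `T(a) = a^q + a`, is the relative trace of
`𝔽_{q²}/𝔽_q`: it is additive, its image lies in `𝔽_q` and its kernel is `𝔽_q`, so comparing
cardinalities shows that it maps `𝔽_{q²}` onto `𝔽_q` with every fibre of size `q`. Since
`Tr^{2m} = Tr^m ∘ T` and the `α i` lie in `𝔽_q`, the summand on the left is `χ_m(T(x))` for
`x = T(a) L(a)`, and `T(T(a) L(a)) = T(a) (L(a) + L(a)^q) = T(a) L(T(a))`, which is the quadratic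
form `∑ α i u^{2^{e i}+1}` evaluated at `u = T(a)`.
-/

namespace AddMonoidHom

variable {G : Type*} [AddGroup G] [Fintype G]

theorem sum_comp_eq_card_ker_nsmul {H M : Type*} [AddMonoid H] [DecidableEq H] [AddCommMonoid M]
    (f : G →+ H) (g : H → M) :
    ∑ a, g (f a) = #{a | f a = 0} • ∑ u ∈ univ.image f, g u := by
  rw [sum_comp, smul_sum]
  refine sum_congr rfl fun u hu => ?_
  obtain ⟨a, -, rfl⟩ := mem_image.mp hu
  rw [card_fiber_eq_of_mem_range f ⟨a, rfl⟩ ⟨0, map_zero f⟩]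

theorem image_eq_ker_of_card_eq_mul_self [DecidableEq G] (f : G →+ G)
    (hff : ∀ a, f (f a) = 0) {b : ℕ} (hker : #{a | f a = 0} ≤ b) (hG : Fintype.card G = b * b) :
    univ.image f = ({a | f a = 0} : Finset G) ∧ #{a | f a = 0} = b := by
  have himage : univ.image f ⊆ ({a | f a = 0} : Finset G) := by
    intro u hu
    obtain ⟨a, -, rfl⟩ := mem_image.mp hu
    simpa using hff a
  have hcount : #{a | f a = 0} * #(univ.image f) = b * b := by
    simpa [← hG] using (sum_comp_eq_card_ker_nsmul f (fun _ => (1 : ℕ))).symm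
  have hle : #(univ.image f) ≤ #{a | f a = 0} := card_le_card himage
  have hcard : #{a | f a = 0} = b := by nlinarith
  refine ⟨eq_of_subset_of_card_le himage ?_, hcard⟩
  rw [hcard] at hcount ⊢
  nlinarith

end AddMonoidHom

theorem card_filter_pow_eq_self_le {K : Type*} [CommRing K] [IsDomain K] [Fintype K]
    [DecidableEq K] {n : ℕ} (hn : 1 < n) : #{u : K | u ^ n = u} ≤ n := by
  open Polynomial in
  have hdeg : (X ^ n - X : K[X]).natDegree = n := by
    rw [natDegree_sub_eq_left_of_natDegree_lt] <;> simp [hn]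
  have hne : (X ^ n - X : K[X]) ≠ 0 := by
    rintro h
    simp [h] at hdeg
    omega
  calc #{u : K | u ^ n = u} ≤ (X ^ n - X : K[X]).natDegree :=
        card_le_degree_of_subset_roots fun u hu => by
          simpa [mem_roots hne, sub_eq_zero] using hu
    _ = n := hdeg

theorem charP_two_of_card_eq_two_pow {F : Type*} [Field F] [Fintype F] {n : ℕ}
    (hF : Fintype.card F = 2 ^ n) : CharP F 2 := by
  have h : (2 : F) ^ n = 0 := by exact_mod_cast hF ▸ FiniteField.cast_card_eq_zero F
  exact CharTwo.of_one_ne_zero_of_two_eq_zero one_ne_zero (eq_zero_of_pow_eq_zero h)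

section RelTrace

variable {R : Type*} [CommRing R] [CharP R 2] (m : ℕ)

def relTrace : R →+ R where
  toFun a := a ^ 2 ^ m + a
  map_zero' := by simp
  map_add' a b := by rw [add_pow_char_pow]; ring

@[simp]
theorem relTrace_apply (a : R) : relTrace m a = a ^ 2 ^ m + a := rfl

theorem relTrace_eq_zero_iff {a : R} : relTrace m a = 0 ↔ a ^ 2 ^ m = a :=
  CharTwo.add_eq_zero

theorem chi_two_mul {F : Type*} [Field F] [DecidableEq F] [CharP F 2] (x : F) :
    chi (2 * m) x = chi m (relTrace m x) := by
  have hsplit : ∑ i ∈ range (2 * m), x ^ 2 ^ i = ∑ i ∈ range m, (x ^ 2 ^ m + x) ^ 2 ^ i := by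
    simp_rw [two_mul, sum_range_add, add_pow_char_pow, ← pow_mul, ← pow_add, sum_add_distrib,
      add_comm]
  rw [chi, chi, hsplit, relTrace_apply]

variable {m}

theorem relTrace_pow {a : R} (ha : a ^ 2 ^ (2 * m) = a) :
    relTrace m a ^ 2 ^ m = relTrace m a := by
  rw [relTrace_apply, add_pow_char_pow, ← pow_mul, ← pow_add, ← two_mul, ha, add_comm]

theorem relTrace_relTrace {a : R} (ha : a ^ 2 ^ (2 * m) = a) : relTrace m (relTrace m a) = 0 :=
  (relTrace_eq_zero_iff m).mpr (relTrace_pow ha)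

variable {ι : Type*} (s : Finset ι) {α : ι → R} (e : ι → ℕ)

theorem linearized_pow (hα : ∀ i, α i ^ 2 ^ m = α i) (x : R) :
    (∑ i ∈ s, α i * x ^ 2 ^ e i) ^ 2 ^ m = ∑ i ∈ s, α i * (x ^ 2 ^ m) ^ 2 ^ e i := by
  rw [sum_pow_char_pow]
  refine sum_congr rfl fun i _ => ?_
  rw [mul_pow, hα i, ← pow_mul, ← pow_mul, mul_comm (2 ^ e i)]

theorem relTrace_mul_linearized (hα : ∀ i, α i ^ 2 ^ m = α i) {a : R}
    (ha : a ^ 2 ^ (2 * m) = a) :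
    relTrace m (relTrace m a * ∑ i ∈ s, α i * a ^ 2 ^ e i)
      = ∑ i ∈ s, α i * relTrace m a ^ (2 ^ e i + 1) := by
  set u := relTrace m a with hu
  have hL : ∑ i ∈ s, α i * a ^ 2 ^ e i + ∑ i ∈ s, α i * (a ^ 2 ^ m) ^ 2 ^ e i
      = ∑ i ∈ s, α i * u ^ 2 ^ e i := by
    simp_rw [← sum_add_distrib, ← mul_add, ← add_pow_char_pow, hu, relTrace_apply, add_comm]
  rw [relTrace_apply, mul_pow, relTrace_pow ha, linearized_pow s e hα, add_comm, ← mul_add, hL,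
    mul_sum]
  exact sum_congr rfl fun i _ => by ring

end RelTrace

theorem stmt_8_general (m : ℕ) (F : Type*) [Field F] [Fintype F] [DecidableEq F]
    (hF : Fintype.card F = 2 ^ (2 * m))
    (k : ℕ) (α : Fin (k + 1) → F) (e : Fin (k + 1) → ℕ)
    (hα : ∀ i, (α i) ^ 2 ^ m = α i) :
    ∑ a : F, chi (2 * m) ((a ^ 2 ^ m + a) * ∑ i, α i * a ^ 2 ^ (e i))
      = 2 ^ m * ∑ u ∈ univ.filter (fun u : F => u ^ 2 ^ m = u),
          chi m (∑ i, α i * u ^ (2 ^ (e i) + 1)) := by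
  have := charP_two_of_card_eq_two_pow hF
  have hfix : ∀ a : F, a ^ 2 ^ (2 * m) = a := fun a => hF ▸ FiniteField.pow_card a
  have hm : m ≠ 0 := by
    rintro rfl
    simpa [hF] using (Fintype.one_lt_card : 1 < Fintype.card F)
  have hker : univ.filter (fun a : F => relTrace m a = 0)
      = univ.filter (fun u => u ^ 2 ^ m = u) :=
    filter_congr fun a _ => relTrace_eq_zero_iff m
  obtain ⟨himage, hcard⟩ := (relTrace m).image_eq_ker_of_card_eq_mul_self
    (fun a => relTrace_relTrace (hfix a))
    (hker ▸ card_filter_pow_eq_self_le (Nat.one_lt_two_pow hm)) (by rw [hF, pow_mul']; ring)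
  calc ∑ a : F, chi (2 * m) ((a ^ 2 ^ m + a) * ∑ i, α i * a ^ 2 ^ (e i))
      = ∑ a : F, chi m (∑ i, α i * relTrace m a ^ (2 ^ e i + 1)) := by
        simp_rw [← relTrace_apply, chi_two_mul, relTrace_mul_linearized _ _ hα (hfix _)]
    _ = 2 ^ m * ∑ u ∈ univ.filter (fun u : F => u ^ 2 ^ m = u),
          chi m (∑ i, α i * u ^ (2 ^ (e i) + 1)) := by
        rw [(relTrace m).sum_comp_eq_card_ker_nsmul (fun u => chi m (∑ i, α i * u ^ (2 ^ e i + 1))),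
          himage, hcard, hker, nsmul_eq_mul, Nat.cast_pow, Nat.cast_ofNat]

theorem stmt_8 (m : ℕ) (hm : 1 ≤ m) (F : Type*) [Field F] [Fintype F] [DecidableEq F]
    (hF : Fintype.card F = 2 ^ (2 * m))
    (k : ℕ) (α : Fin (k + 1) → F) (e : Fin (k + 1) → ℕ)
    (hα : ∀ i, (α i) ^ 2 ^ m = α i) :
    ∑ a : F, chi (2 * m) ((a ^ 2 ^ m + a) * ∑ i, α i * a ^ 2 ^ (e i))
      = 2 ^ m * ∑ u ∈ univ.filter (fun u : F => u ^ 2 ^ m = u),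
          chi m (∑ i, α i * u ^ (2 ^ (e i) + 1)) :=
  stmt_8_general m F hF k α e hα
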